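/- arXiv:1409.3871 — 3 statements merged into one kernel-verified Lean document; each statement's English description precedes it below -/
import Mathlib

section
/- Every nonempty convex subset of a locally convex topological vector space is admissible in the sense of Klee: for every compact subset K and every open neighborhood V of 0 there exists a continuous map h : K → X with x − h(x) ∈ V for all x ∈ K and h(K) contained in a finite-dimensional subspace. -/
/-!
Shrink `V` to a convex open neighbourhood `W` of `0` and cover `K` by finitely many translates
`xᵢ + W` with `xᵢ ∈ K`. The tent functions `y ↦ max (1 - gauge W (y - xᵢ)) 0` are continuous and
positive exactly on `xᵢ + W`, so normalising them gives a partition of unity on `K`. The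
corresponding convex combination `h y` of the `xᵢ` lies in `X` by convexity and in the span of the
`xᵢ`, while `y - h y` is a convex combination of those `y - xᵢ` that lie in `W`.
-/

open Set

section CenterMass

variable {ι E : Type*} [AddCommGroup E] [Module ℝ E]

lemma Finset.sub_centerMass {t : Finset ι} {w : ι → ℝ} (hw : ∑ i ∈ t, w i ≠ 0) (y : E)
    (z : ι → E) : y - t.centerMass w z = t.centerMass w (fun i => y - z i) := by
  simp only [Finset.centerMass, smul_sub, Finset.sum_sub_distrib, ← Finset.sum_smul,
    inv_smul_smul₀ hw]

lemma Finset.centerMass_mem_span (t : Finset ι) (w : ι → ℝ) (z : ι → E) :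
    t.centerMass w z ∈ Submodule.span ℝ (z '' (t : Set ι)) :=
  Submodule.smul_mem _ _ <| Submodule.sum_mem _ fun _ hi =>
    Submodule.smul_mem _ _ <| Submodule.subset_span <| Set.mem_image_of_mem z hi

lemma Convex.centerMass_mem_of_ne_zero {s : Set E} (hs : Convex ℝ s) {t : Finset ι}
    {w : ι → ℝ} {z : ι → E} (hw₀ : ∀ i ∈ t, 0 ≤ w i) (hw : 0 < ∑ i ∈ t, w i)
    (hz : ∀ i ∈ t, w i ≠ 0 → z i ∈ s) : t.centerMass w z ∈ s := by
  classical
  rw [← Finset.centerMass_filter_ne_zero]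
  exact hs.centerMass_mem (fun i hi => hw₀ i (Finset.mem_filter.1 hi).1)
    (by rwa [Finset.sum_filter_ne_zero]) fun i hi => hz i (Finset.mem_filter.1 hi).1
      (Finset.mem_filter.1 hi).2

end CenterMass

section Tent

variable {E : Type*} [AddCommGroup E] [Module ℝ E] {W : Set E} {t : Finset E} {y : E}

noncomputable def gaugeTent (W : Set E) (y : E) : ℝ := max (1 - gauge W y) 0

lemma gaugeTent_nonneg (W : Set E) (y : E) : 0 ≤ gaugeTent W y := le_max_right _ _

noncomputable def tentApprox (W : Set E) (t : Finset E) (y : E) : E :=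
  t.centerMass (fun x => gaugeTent W (y - x)) id

lemma tentApprox_mem_span (W : Set E) (t : Finset E) (y : E) :
    tentApprox W t y ∈ Submodule.span ℝ (t : Set E) := by
  simpa only [tentApprox, image_id] using t.centerMass_mem_span (fun x => gaugeTent W (y - x)) id

variable [TopologicalSpace E] [IsTopologicalAddGroup E] [ContinuousSMul ℝ E]

lemma gaugeTent_pos_iff (hc : Convex ℝ W) (ho : IsOpen W) (h0 : (0 : E) ∈ W) :
    0 < gaugeTent W y ↔ y ∈ W := by
  rw [gaugeTent, lt_max_iff, sub_pos, gauge_lt_one_iff_mem_interior hc (ho.mem_nhds h0),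
    ho.interior_eq, lt_self_iff_false, or_false]

lemma continuous_gaugeTent (hc : Convex ℝ W) (ho : IsOpen W) (h0 : (0 : E) ∈ W) :
    Continuous (gaugeTent W) :=
  (continuous_const.sub (continuous_gauge hc (ho.mem_nhds h0))).max continuous_const

lemma sum_gaugeTent_pos (hc : Convex ℝ W) (ho : IsOpen W) (h0 : (0 : E) ∈ W)
    (hy : ∃ x ∈ t, y - x ∈ W) : 0 < ∑ x ∈ t, gaugeTent W (y - x) := by
  obtain ⟨x, hxt, hxy⟩ := hy
  exact Finset.sum_pos' (fun _ _ => gaugeTent_nonneg W _)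
    ⟨x, hxt, (gaugeTent_pos_iff hc ho h0).2 hxy⟩

lemma continuousOn_tentApprox (hc : Convex ℝ W) (ho : IsOpen W) (h0 : (0 : E) ∈ W) :
    ContinuousOn (tentApprox W t) {y | ∃ x ∈ t, y - x ∈ W} := by
  have hw : ∀ x, Continuous fun y => gaugeTent W (y - x) := fun x =>
    (continuous_gaugeTent hc ho h0).comp (continuous_sub_right x)
  refine ContinuousOn.smul ?_
    (continuous_finsetSum _ fun x _ => (hw x).smul continuous_const).continuousOn
  exact (continuous_finsetSum _ fun x _ => hw x).continuousOn.inv₀ fun y hy =>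
    (sum_gaugeTent_pos hc ho h0 hy).ne'

lemma tentApprox_mem_convexHull (hc : Convex ℝ W) (ho : IsOpen W) (h0 : (0 : E) ∈ W)
    (hy : ∃ x ∈ t, y - x ∈ W) :
    tentApprox W t y ∈ convexHull ℝ (t : Set E) :=
  t.centerMass_id_mem_convexHull (fun _ _ => gaugeTent_nonneg W _) (sum_gaugeTent_pos hc ho h0 hy)

lemma sub_tentApprox_mem (hc : Convex ℝ W) (ho : IsOpen W) (h0 : (0 : E) ∈ W)
    (hy : ∃ x ∈ t, y - x ∈ W) : y - tentApprox W t y ∈ W := by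
  have hpos := sum_gaugeTent_pos hc ho h0 hy
  rw [tentApprox, Finset.sub_centerMass hpos.ne']
  exact hc.centerMass_mem_of_ne_zero (fun _ _ => gaugeTent_nonneg W _) hpos fun x _ hx =>
    (gaugeTent_pos_iff hc ho h0).1 ((gaugeTent_nonneg W _).lt_of_ne' hx)

end Tent

theorem convex_admissible_of_locallyConvex_general
    {E : Type*} [AddCommGroup E] [Module ℝ E] [TopologicalSpace E]
    [IsTopologicalAddGroup E] [ContinuousSMul ℝ E] [LocallyConvexSpace ℝ E]
    (X : Set E) (hXconv : Convex ℝ X) :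
    ∀ K : Set E, K ⊆ X → IsCompact K →
      ∀ V : Set E, IsOpen V → (0 : E) ∈ V →
        ∃ h : E → E, ContinuousOn h K ∧ (∀ x ∈ K, h x ∈ X) ∧
          (∀ x ∈ K, x - h x ∈ V) ∧
          ∃ L : Submodule ℝ E, FiniteDimensional ℝ L ∧ ∀ x ∈ K, h x ∈ L := by
  intro K hKX hK V hV hV0
  obtain ⟨W, ⟨hW0, hWo, hWc⟩, hWV⟩ :=
    (LocallyConvexSpace.convex_open_basis_zero ℝ E).mem_iff.1 (hV.mem_nhds hV0)
  obtain ⟨t, htK, hKt⟩ := hK.elim_nhds_subcover (fun x => {y | y - x ∈ W}) fun x _ =>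
    (hWo.preimage (continuous_sub_right x)).mem_nhds (by simpa using hW0)
  have hcover : ∀ y ∈ K, ∃ x ∈ t, y - x ∈ W := fun y hy => by simpa using hKt hy
  refine ⟨tentApprox W t, (continuousOn_tentApprox hWc hWo hW0).mono hcover,
    fun y hy => ?_, fun y hy => hWV (sub_tentApprox_mem hWc hWo hW0 (hcover y hy)),
    Submodule.span ℝ t, inferInstance, fun y _ => tentApprox_mem_span W t y⟩
  exact (hXconv.convexHull_subset_iff.2 fun x hx => hKX (htK x hx))
    (tentApprox_mem_convexHull hWc hWo hW0 (hcover y hy))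

/-- Every nonempty convex subset `X` of a (real, Hausdorff) locally
convex topological vector space `E` is admissible in the sense of Klee: for every
compact `K ⊆ X` and every open neighborhood `V` of `0` in `E` there is a continuous
map `h` on `K` with values in `X`, with `x - h x ∈ V` for all `x ∈ K`, and with
`h (K)` contained in a finite-dimensional linear subspace of `E`. -/
theorem convex_admissible_of_locallyConvex
    {E : Type*} [AddCommGroup E] [Module ℝ E] [TopologicalSpace E]
    [IsTopologicalAddGroup E] [ContinuousSMul ℝ E] [LocallyConvexSpace ℝ E]
    (X : Set E) (hXne : X.Nonempty) (hXconv : Convex ℝ X) :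
    ∀ K : Set E, K ⊆ X → IsCompact K →
      ∀ V : Set E, IsOpen V → (0 : E) ∈ V →
        ∃ h : E → E, ContinuousOn h K ∧ (∀ x ∈ K, h x ∈ X) ∧
          (∀ x ∈ K, x - h x ∈ V) ∧
          ∃ L : Submodule ℝ E, FiniteDimensional ℝ L ∧ ∀ x ∈ K, h x ∈ L :=
  convex_admissible_of_locallyConvex_general X hXconv
end

section
/- Let (f_n) be a bounded sequence in L¹(μ) on a finite measure space that is uniformly integrable. Then (f_n) has a subsequence converging weakly in L¹(μ) (Dunford–Pettis theorem, sequential form). -/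
/-!
The truncations `T_k f_n = f_n · 1_{-k < f_n ≤ k}` are bounded by `k`, hence lie in a ball of
`L²(μ)`. For countably many bounded sequences `x_i` in a Hilbert space, once
`⟪x_i (φ n), x_j m⟫` converges for all `i, j, m` (a diagonal extraction, by compactness of a
countable product of intervals), `⟪x_i (φ n), y⟫` converges for every `y`: the set of such `y`
is a closed subspace containing all the `x_j m` and their orthogonal complement. This yields one subsequence along which `T_k f_{φ n} ⇀ h_k` in `L²` for
every `k`, so `∫ T_k f_{φ n} g → ∫ h_k g` for bounded measurable `g`.

Uniform integrability says `‖f_n - T_k f_n‖₁ ≤ ε_k` uniformly in `n`, with `ε_k → 0`. Testing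
against a sign of `h_k - h_j` (weak lower semicontinuity of the `L¹` norm) gives
`‖h_k - h_j‖₁ ≤ ε_k + ε_j`, so `h_k` converges in `L¹` to some `flim`, and interchanging the
limits in `k` and `n` (Moore–Osgood) gives `∫ f_{φ n} g → ∫ flim g`.
-/

open MeasureTheory Filter Topology ProbabilityTheory
open scoped RealInnerProductSpace

theorem exists_strictMono_forall_tendsto {ι : Type*} [Countable ι] (a : ι → ℕ → ℝ)
    (hbdd : ∀ i, ∃ B, ∀ n, |a i n| ≤ B) :
    ∃ φ : ℕ → ℕ, StrictMono φ ∧ ∀ i, ∃ l, Tendsto (fun n => a i (φ n)) atTop (𝓝 l) := by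
  choose B hB using hbdd
  have hcompact : IsCompact (Set.univ.pi fun i => Set.Icc (-B i) (B i)) :=
    isCompact_univ_pi fun _ => isCompact_Icc
  obtain ⟨l, -, φ, hφ, hl⟩ :=
    hcompact.tendsto_subseq (x := fun n i => a i n) fun n i _ => abs_le.1 (hB i n)
  exact ⟨φ, hφ, fun i => ⟨l i, tendsto_pi_nhds.1 hl i⟩⟩

theorem cauchySeq_of_forall_exists_cauchySeq_dist_le {α : Type*} [PseudoMetricSpace α] {u : ℕ → α}
    (h : ∀ ε > 0, ∃ v : ℕ → α, CauchySeq v ∧ ∀ n, dist (u n) (v n) ≤ ε) : CauchySeq u := by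
  refine Metric.cauchySeq_iff.2 fun ε hε => ?_
  obtain ⟨v, hv, huv⟩ := h (ε / 3) (by positivity)
  obtain ⟨N, hN⟩ := Metric.cauchySeq_iff.1 hv (ε / 3) (by positivity)
  refine ⟨N, fun m hm n hn => ?_⟩
  have := dist_triangle4 (u m) (v m) (v n) (u n)
  linarith [huv m, hN m hm n hn, dist_comm (v n) (u n) ▸ huv n]

section Hilbert

variable {E : Type*} [NormedAddCommGroup E] [InnerProductSpace ℝ E]

def weakConvergenceSubmodule (x : ℕ → E) : Submodule ℝ E where
  carrier := {y | ∃ l, Tendsto (fun n => ⟪x n, y⟫) atTop (𝓝 l)}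
  add_mem' := by
    rintro y z ⟨l, hl⟩ ⟨l', hl'⟩
    exact ⟨l + l', by simpa only [inner_add_right] using hl.add hl'⟩
  zero_mem' := ⟨0, by simpa only [inner_zero_right] using tendsto_const_nhds⟩
  smul_mem' := by
    rintro c y ⟨l, hl⟩
    exact ⟨c * l, by simpa only [inner_smul_right] using hl.const_mul c⟩

theorem isClosed_weakConvergenceSubmodule {x : ℕ → E} {B : ℝ} (hB : ∀ n, ‖x n‖ ≤ B) :
    IsClosed (weakConvergenceSubmodule x : Set E) := by
  refine isClosed_of_closure_subset fun y hy => cauchySeq_tendsto_of_complete ?_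
  refine cauchySeq_of_forall_exists_cauchySeq_dist_le fun ε hε => ?_
  obtain ⟨z, ⟨l, hz⟩, hyz⟩ := Metric.mem_closure_iff.1 hy (ε / (|B| + 1)) (by positivity)
  refine ⟨fun n => ⟪x n, z⟫, hz.cauchySeq, fun n => ?_⟩
  calc dist ⟪x n, y⟫ ⟪x n, z⟫ = |⟪x n, y - z⟫| := by rw [inner_sub_right, Real.dist_eq]
    _ ≤ ‖x n‖ * ‖y - z‖ := abs_real_inner_le_norm _ _
    _ ≤ (|B| + 1) * (ε / (|B| + 1)) := by
        gcongr
        · exact (hB n).trans ((le_abs_self B).trans (le_add_of_nonneg_right zero_le_one))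
        · exact (dist_eq_norm y z ▸ hyz).le
    _ = ε := by field_simp

theorem weakConvergenceSubmodule_eq_top [CompleteSpace E] {x : ℕ → E} {B : ℝ}
    (hB : ∀ n, ‖x n‖ ≤ B) {s : Set E} (hxs : ∀ n, x n ∈ (Submodule.span ℝ s).topologicalClosure)
    (hs : s ⊆ weakConvergenceSubmodule x) : weakConvergenceSubmodule x = ⊤ := by
  set W := (Submodule.span ℝ s).topologicalClosure
  have hW : W ≤ weakConvergenceSubmodule x :=
    Submodule.topologicalClosure_minimal _ (Submodule.span_le.2 hs)
      (isClosed_weakConvergenceSubmodule hB)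
  have hWperp : Wᗮ ≤ weakConvergenceSubmodule x := fun y hy =>
    ⟨0, by simpa only [Submodule.inner_right_of_mem_orthogonal (hxs _) hy] using
      tendsto_const_nhds⟩
  have : CompleteSpace W := (Submodule.isClosed_topologicalClosure _).completeSpace_coe
  exact eq_top_iff.2 (W.sup_orthogonal_of_hasOrthogonalProjection ▸ sup_le hW hWperp)

/-- Banach–Steinhaus makes the pointwise limit a continuous functional; Riesz represents it. -/
theorem exists_tendsto_inner_of_forall_exists [CompleteSpace E] {x : ℕ → E}
    (hx : ∀ y, ∃ l, Tendsto (fun n => ⟪x n, y⟫) atTop (𝓝 l)) :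
    ∃ h : E, ∀ y, Tendsto (fun n => ⟪x n, y⟫) atTop (𝓝 ⟪h, y⟫) := by
  choose l hl using hx
  let L : StrongDual ℝ E := continuousLinearMapOfTendsto (fun n => innerSL ℝ (x n))
    (tendsto_pi_nhds.2 hl)
  refine ⟨(InnerProductSpace.toDual ℝ E).symm L, fun y => ?_⟩
  rw [InnerProductSpace.toDual_symm_apply]
  exact hl y

theorem exists_strictMono_forall_tendsto_inner [CompleteSpace E] {ι : Type*} [Countable ι]
    (x : ι → ℕ → E) (hbdd : ∀ i, ∃ B, ∀ n, ‖x i n‖ ≤ B) :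
    ∃ φ : ℕ → ℕ, StrictMono φ ∧ ∃ h : ι → E,
      ∀ i y, Tendsto (fun n => ⟪x i (φ n), y⟫) atTop (𝓝 ⟪h i, y⟫) := by
  choose B hB using hbdd
  obtain ⟨φ, hφ, hconv⟩ := exists_strictMono_forall_tendsto
    (fun (p : ι × ι × ℕ) n => ⟪x p.1 n, x p.2.1 p.2.2⟫) fun p =>
      ⟨B p.1 * ‖x p.2.1 p.2.2‖, fun n => (abs_real_inner_le_norm _ _).trans
        (mul_le_mul_of_nonneg_right (hB _ _) (norm_nonneg _))⟩
  refine ⟨φ, hφ, ?_⟩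
  have htop : ∀ i, weakConvergenceSubmodule (fun n => x i (φ n)) = ⊤ := fun i =>
    weakConvergenceSubmodule_eq_top (fun n => hB i (φ n))
      (s := Set.range fun p : ι × ℕ => x p.1 p.2)
      (fun n => Submodule.le_topologicalClosure _ (Submodule.subset_span ⟨(i, φ n), rfl⟩))
      (by rintro _ ⟨⟨j, m⟩, rfl⟩; exact hconv (i, j, m))
  choose h hh using fun i => exists_tendsto_inner_of_forall_exists fun y =>
    (Submodule.eq_top_iff'.1 (htop i) y : y ∈ weakConvergenceSubmodule (fun n => x i (φ n)))
  exact ⟨h, hh⟩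

end Hilbert

section WeakL1

variable {Ω : Type*} [MeasurableSpace Ω] {μ : Measure Ω}

def TendstoWeakly (μ : Measure Ω) (u : ℕ → Ω → ℝ) (f : Ω → ℝ) : Prop :=
  ∀ g : Ω → ℝ, Measurable g → (∃ D : ℝ, ∀ x, |g x| ≤ D) →
    Tendsto (fun n => ∫ x, u n x * g x ∂μ) atTop (𝓝 (∫ x, f x * g x ∂μ))

theorem abs_integral_mul_le {u g : Ω → ℝ} {D : ℝ} (hu : Integrable u μ)
    (hg : ∀ x, |g x| ≤ D) : |∫ x, u x * g x ∂μ| ≤ D * ∫ x, |u x| ∂μ := by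
  have : ‖∫ x, u x * g x ∂μ‖ ≤ ∫ x, D * |u x| ∂μ := by
    refine norm_integral_le_of_norm_le (hu.abs.const_mul D) (ae_of_all _ fun x => ?_)
    rw [Real.norm_eq_abs, abs_mul, mul_comm]
    exact mul_le_mul_of_nonneg_right (hg x) (abs_nonneg _)
  rwa [Real.norm_eq_abs, integral_const_mul] at this

theorem integral_sub_mul {a b g : Ω → ℝ} {D : ℝ} (ha : Integrable a μ) (hb : Integrable b μ)
    (hg : Measurable g) (hgD : ∀ x, |g x| ≤ D) :
    ∫ x, (a x - b x) * g x ∂μ = ∫ x, a x * g x ∂μ - ∫ x, b x * g x ∂μ := by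
  have hbound : ∀ᵐ x ∂μ, ‖g x‖ ≤ D := ae_of_all _ hgD
  simp_rw [sub_mul]
  exact integral_sub (ha.mul_bdd hg.aestronglyMeasurable hbound)
    (hb.mul_bdd hg.aestronglyMeasurable hbound)

theorem abs_integral_mul_sub_integral_mul_le {a b g : Ω → ℝ} {D : ℝ} (ha : Integrable a μ)
    (hb : Integrable b μ) (hg : Measurable g) (hgD : ∀ x, |g x| ≤ D) :
    |∫ x, a x * g x ∂μ - ∫ x, b x * g x ∂μ| ≤ D * ∫ x, |a x - b x| ∂μ := by
  rw [← integral_sub_mul ha hb hg hgD]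
  exact abs_integral_mul_le (ha.sub hb) hgD

theorem TendstoWeakly.sub {u v : ℕ → Ω → ℝ} {f f' : Ω → ℝ} (hu : ∀ n, Integrable (u n) μ)
    (hv : ∀ n, Integrable (v n) μ) (hf : Integrable f μ) (hf' : Integrable f' μ)
    (huf : TendstoWeakly μ u f) (hvf' : TendstoWeakly μ v f') :
    TendstoWeakly μ (fun n x => u n x - v n x) (fun x => f x - f' x) := by
  rintro g hg ⟨D, hD⟩
  simp_rw [integral_sub_mul (hu _) (hv _) hg hD, integral_sub_mul hf hf' hg hD]
  exact (huf g hg ⟨D, hD⟩).sub (hvf' g hg ⟨D, hD⟩)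

theorem exists_measurable_integral_mul_eq_integral_abs {ℓ : Ω → ℝ}
    (hℓ : AEStronglyMeasurable ℓ μ) :
    ∃ g : Ω → ℝ, Measurable g ∧ (∀ x, |g x| ≤ 1) ∧ ∫ x, ℓ x * g x ∂μ = ∫ x, |ℓ x| ∂μ := by
  have hmeas := hℓ.stronglyMeasurable_mk.measurable
  refine ⟨fun x => if 0 ≤ hℓ.mk ℓ x then 1 else -1,
    Measurable.ite (measurableSet_le measurable_const hmeas) measurable_const measurable_const,
    fun x => by dsimp only; split_ifs <;> simp, integral_congr_ae ?_⟩
  filter_upwards [hℓ.ae_eq_mk] with x hx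
  rw [hx]
  split_ifs with h
  · rw [mul_one, abs_of_nonneg h]
  · rw [mul_neg_one, abs_of_neg (not_le.1 h)]

theorem TendstoWeakly.integral_abs_le {w : ℕ → Ω → ℝ} {ℓ : Ω → ℝ} {e : ℝ}
    (hw : ∀ n, Integrable (w n) μ) (hℓ : AEStronglyMeasurable ℓ μ) (hlim : TendstoWeakly μ w ℓ)
    (he : ∀ n, ∫ x, |w n x| ∂μ ≤ e) : ∫ x, |ℓ x| ∂μ ≤ e := by
  obtain ⟨g, hg, hg1, hℓg⟩ := exists_measurable_integral_mul_eq_integral_abs hℓ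
  rw [← hℓg]
  refine le_of_tendsto' (hlim g hg ⟨1, hg1⟩) fun n => ?_
  calc ∫ x, w n x * g x ∂μ ≤ 1 * ∫ x, |w n x| ∂μ :=
        (le_abs_self _).trans (abs_integral_mul_le (hw n) hg1)
    _ ≤ e := by rw [one_mul]; exact he n

theorem integral_abs_sub_le_of_tendstoWeakly {u v v' : ℕ → Ω → ℝ} {h h' : Ω → ℝ} {a b : ℝ}
    (hu : ∀ n, Integrable (u n) μ) (hv : ∀ n, Integrable (v n) μ)
    (hv' : ∀ n, Integrable (v' n) μ) (hh : Integrable h μ) (hh' : Integrable h' μ)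
    (hvh : TendstoWeakly μ v h) (hvh' : TendstoWeakly μ v' h')
    (ha : ∀ n, ∫ x, |u n x - v n x| ∂μ ≤ a) (hb : ∀ n, ∫ x, |u n x - v' n x| ∂μ ≤ b) :
    ∫ x, |h x - h' x| ∂μ ≤ a + b := by
  refine (hvh.sub hv hv' hh hh' hvh').integral_abs_le (fun n => (hv n).sub (hv' n))
    (hh.sub hh').aestronglyMeasurable fun n => ?_
  calc ∫ x, |v n x - v' n x| ∂μ ≤ ∫ x, (|u n x - v n x| + |u n x - v' n x|) ∂μ := by
        refine integral_mono ((hv n).sub (hv' n)).abs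
          (((hu n).sub (hv n)).abs.add ((hu n).sub (hv' n)).abs) fun x => ?_
        simpa only [abs_sub_comm (u n x) (v n x)] using abs_sub_le (v n x) (u n x) (v' n x)
    _ = ∫ x, |u n x - v n x| ∂μ + ∫ x, |u n x - v' n x| ∂μ :=
        integral_add ((hu n).sub (hv n)).abs ((hu n).sub (hv' n)).abs
    _ ≤ a + b := add_le_add (ha n) (hb n)

theorem dist_toL1_toL1 {f g : Ω → ℝ} (hf : Integrable f μ) (hg : Integrable g μ) :
    dist (hf.toL1 f) (hg.toL1 g) = ∫ x, |f x - g x| ∂μ := by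
  rw [dist_eq_norm, ← Integrable.toL1_sub, L1.norm_eq_integral_norm]
  refine integral_congr_ae ?_
  filter_upwards [Integrable.coeFn_toL1 (hf.sub hg)] with x hx
  rw [hx, Real.norm_eq_abs, Pi.sub_apply]

theorem exists_integrable_tendsto_integral_abs_sub {h : ℕ → Ω → ℝ}
    (hh : ∀ k, Integrable (h k) μ)
    (hcauchy : ∀ ε > 0, ∃ N, ∀ k ≥ N, ∀ j ≥ N, ∫ x, |h k x - h j x| ∂μ < ε) :
    ∃ f : Ω → ℝ, Integrable f μ ∧ Tendsto (fun k => ∫ x, |h k x - f x| ∂μ) atTop (𝓝 0) := by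
  have hH : CauchySeq fun k => (hh k).toL1 (h k) := Metric.cauchySeq_iff.2 fun ε hε => by
    simpa only [dist_toL1_toL1] using hcauchy ε hε
  obtain ⟨F, hF⟩ := cauchySeq_tendsto_of_complete hH
  refine ⟨F, L1.integrable_coeFn F, ?_⟩
  refine (tendsto_iff_dist_tendsto_zero.1 hF).congr fun k => ?_
  rw [← dist_toL1_toL1 (hh k) (L1.integrable_coeFn F), Integrable.toL1_coeFn]

theorem TendstoWeakly.of_uniform_approx {u : ℕ → Ω → ℝ} {v : ℕ → ℕ → Ω → ℝ}
    {h : ℕ → Ω → ℝ} {f : Ω → ℝ} (hu : ∀ n, Integrable (u n) μ)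
    (hv : ∀ k n, Integrable (v k n) μ) (hh : ∀ k, Integrable (h k) μ) (hf : Integrable f μ)
    (happrox : ∀ ε > 0, ∀ᶠ k in atTop, ∀ n, ∫ x, |u n x - v k n x| ∂μ ≤ ε)
    (hvh : ∀ k, TendstoWeakly μ (v k) (h k))
    (hhf : Tendsto (fun k => ∫ x, |h k x - f x| ∂μ) atTop (𝓝 0)) :
    TendstoWeakly μ u f := by
  rintro g hg ⟨D, hD⟩
  set C := |D| + 1
  have hC : 0 < C := by positivity
  have hgC : ∀ x, |g x| ≤ C := fun x => (hD x).trans ((le_abs_self D).trans (by linarith))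
  have hunif : TendstoUniformly (fun k n => ∫ x, v k n x * g x ∂μ)
      (fun n => ∫ x, u n x * g x ∂μ) atTop := by
    refine Metric.tendstoUniformly_iff.2 fun ε hε => ?_
    filter_upwards [happrox (ε / (2 * C)) (by positivity)] with k hk n
    calc dist _ _ ≤ C * ∫ x, |u n x - v k n x| ∂μ :=
          abs_integral_mul_sub_integral_mul_le (hu n) (hv k n) hg hgC
      _ ≤ C * (ε / (2 * C)) := by gcongr; exact hk n
      _ < ε := by field_simp; linarith
  have hlim : Tendsto (fun k => ∫ x, h k x * g x ∂μ) atTop (𝓝 (∫ x, f x * g x ∂μ)) := by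
    refine tendsto_iff_dist_tendsto_zero.2 (squeeze_zero (fun _ => dist_nonneg)
      (fun k => abs_integral_mul_sub_integral_mul_le (hh k) hf hg hgC) ?_)
    simpa using hhf.const_mul C
  exact hunif.tendsto_of_eventually_tendsto (Eventually.of_forall fun k => hvh k g hg ⟨D, hD⟩)
    hlim

theorem exists_tendstoWeakly_of_uniform_approx {u : ℕ → Ω → ℝ} {v : ℕ → ℕ → Ω → ℝ}
    {h : ℕ → Ω → ℝ} (hu : ∀ n, Integrable (u n) μ) (hv : ∀ k n, Integrable (v k n) μ)
    (hh : ∀ k, Integrable (h k) μ)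
    (happrox : ∀ ε > 0, ∀ᶠ k in atTop, ∀ n, ∫ x, |u n x - v k n x| ∂μ ≤ ε)
    (hvh : ∀ k, TendstoWeakly μ (v k) (h k)) :
    ∃ f : Ω → ℝ, Integrable f μ ∧ TendstoWeakly μ u f := by
  obtain ⟨f, hf, hhf⟩ := exists_integrable_tendsto_integral_abs_sub hh fun ε hε => by
    obtain ⟨N, hN⟩ := eventually_atTop.1 (happrox (ε / 3) (by positivity))
    refine ⟨N, fun k hk j hj => ?_⟩
    have := integral_abs_sub_le_of_tendstoWeakly hu (hv k) (hv j) (hh k) (hh j) (hvh k) (hvh j)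
      (hN k hk) (hN j hj)
    linarith
  exact ⟨f, hf, TendstoWeakly.of_uniform_approx hu hv hh hf happrox hvh hhf⟩

theorem tendstoWeakly_of_tendsto_inner [IsFiniteMeasure μ] {u : ℕ → Ω → ℝ}
    (hu : ∀ n, MemLp (u n) 2 μ) {h : Lp ℝ 2 μ}
    (hlim : ∀ y, Tendsto (fun n => ⟪(hu n).toLp (u n), y⟫) atTop (𝓝 ⟪h, y⟫)) :
    TendstoWeakly μ u h := by
  rintro g hg ⟨D, hD⟩
  have hg2 : MemLp g 2 μ := MemLp.of_bound hg.aestronglyMeasurable D (ae_of_all _ hD)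
  have hinner : ∀ (a : Lp ℝ 2 μ) (b : Ω → ℝ), a =ᵐ[μ] b →
      ⟪a, hg2.toLp g⟫ = ∫ x, b x * g x ∂μ := fun a b hab => by
    rw [L2.inner_def]
    refine integral_congr_ae ?_
    filter_upwards [hab, hg2.coeFn_toLp] with x hx hgx
    rw [hx, hgx, Real.inner_apply]
  simpa only [hinner _ _ (MemLp.coeFn_toLp _), hinner h h EventuallyEq.rfl] using
    hlim (hg2.toLp g)

theorem integral_abs_sub_truncation_le {f : Ω → ℝ} (hf : Integrable f μ) {M A : ℝ}
    (hMA : M < A) :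
    ∫ x, |f x - truncation f A x| ∂μ ≤ ∫ x in {x | M < |f x|}, |f x| ∂μ := by
  have hint : Integrable (fun x => |f x - truncation f A x|) μ :=
    (hf.sub (hf.mono hf.aestronglyMeasurable.truncation (ae_of_all _ fun x => by
      simpa only [Real.norm_eq_abs] using abs_truncation_le_abs_self f A x))).abs
  rw [← setIntegral_eq_integral_of_forall_compl_eq_zero fun x hx => by
    rw [truncation_eq_self ((not_lt.1 hx).trans_lt hMA), sub_self, abs_zero]]
  refine integral_mono hint.restrict hf.abs.restrict fun x => ?_
  simp only [truncation, Function.comp_apply, Set.indicator_apply, id]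
  split_ifs <;> simp

theorem eventually_integral_abs_sub_truncation_le {f : ℕ → Ω → ℝ}
    (hf : ∀ n, Integrable (f n) μ)
    (hui : ∀ ε > 0, ∃ M, ∀ n, ∫ x in {x | M < |f n x|}, |f n x| ∂μ ≤ ε) :
    ∀ ε > 0, ∀ᶠ k : ℕ in atTop, ∀ n, ∫ x, |f n x - truncation (f n) k x| ∂μ ≤ ε := by
  intro ε hε
  obtain ⟨M, hM⟩ := hui ε hε
  filter_upwards [tendsto_natCast_atTop_atTop.eventually_gt_atTop M] with k hk n
  exact (integral_abs_sub_truncation_le (hf n) hk).trans (hM n)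

end WeakL1

theorem dunford_pettis_sequential_general
    {Ω : Type*} [MeasurableSpace Ω] (μ : Measure Ω) [IsFiniteMeasure μ]
    (f : ℕ → Ω → ℝ) (hf_int : ∀ n, Integrable (f n) μ)
    (hui : ∀ ε : ℝ, 0 < ε → ∃ M : ℝ, 0 < M ∧ ∀ n,
      ∫ x in {x | M < |f n x|}, |f n x| ∂μ ≤ ε) :
    ∃ φ : ℕ → ℕ, StrictMono φ ∧ ∃ flim : Ω → ℝ, Integrable flim μ ∧
      ∀ g : Ω → ℝ, Measurable g → (∃ D : ℝ, ∀ x, |g x| ≤ D) →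
        Filter.Tendsto (fun n => ∫ x, f (φ n) x * g x ∂μ) Filter.atTop
          (nhds (∫ x, flim x * g x ∂μ)) := by
  have hT : ∀ (k : ℕ) n, MemLp (truncation (f n) k) 2 μ := fun k n =>
    (hf_int n).aestronglyMeasurable.memLp_truncation
  have hT_bdd : ∀ k : ℕ, ∃ B, ∀ n, ‖(hT k n).toLp _‖ ≤ B := fun k =>
    ⟨_, fun n => Lp.norm_le_of_ae_bound (abs_nonneg _) <| (hT k n).coeFn_toLp.mono fun x hx => by
      rw [hx, Real.norm_eq_abs]; exact abs_truncation_le_bound _ _ _⟩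
  have happrox := eventually_integral_abs_sub_truncation_le hf_int fun ε hε =>
    (hui ε hε).imp fun _ => And.right
  obtain ⟨φ, hφ, H, hH⟩ :=
    exists_strictMono_forall_tendsto_inner (fun k n => (hT k n).toLp _) hT_bdd
  obtain ⟨flim, hflim, hlim⟩ := exists_tendstoWeakly_of_uniform_approx (u := fun n => f (φ n))
    (v := fun (k : ℕ) n => truncation (f (φ n)) k) (h := fun k => H k)
    (fun n => hf_int (φ n)) (fun k n => (hT k (φ n)).integrable one_le_two)
    (fun k => (Lp.memLp (H k)).integrable one_le_two)
    (fun ε hε => (happrox ε hε).mono fun k hk n => hk (φ n))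
    fun k => tendstoWeakly_of_tendsto_inner (fun n => hT k (φ n)) (hH k)
  exact ⟨φ, hφ, flim, hflim, hlim⟩

/-- (Dunford–Pettis, sequential form.)  Let `(f_n)` be a bounded,
uniformly integrable sequence in `L¹(μ)` over a finite measure space.  Then `(f_n)`
has a subsequence converging weakly in `L¹(μ)`, i.e. there are a strictly monotone
`φ : ℕ → ℕ` and an integrable `f` such that `∫ f_{φ(n)} g → ∫ f g` for every bounded
measurable `g` (equivalently, every `g ∈ L^∞`). -/
theorem dunford_pettis_sequential
    {Ω : Type*} [MeasurableSpace Ω] (μ : Measure Ω) [IsFiniteMeasure μ]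
    (f : ℕ → Ω → ℝ) (hf_int : ∀ n, Integrable (f n) μ)
    (C : ℝ) (hf_bdd : ∀ n, ∫ x, |f n x| ∂μ ≤ C)
    (hui : ∀ ε : ℝ, 0 < ε → ∃ M : ℝ, 0 < M ∧ ∀ n,
      ∫ x in {x | M < |f n x|}, |f n x| ∂μ ≤ ε) :
    ∃ φ : ℕ → ℕ, StrictMono φ ∧ ∃ flim : Ω → ℝ, Integrable flim μ ∧
      ∀ g : Ω → ℝ, Measurable g → (∃ D : ℝ, ∀ x, |g x| ≤ D) →
        Filter.Tendsto (fun n => ∫ x, f (φ n) x * g x ∂μ) Filter.atTop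
          (nhds (∫ x, flim x * g x ∂μ)) :=
  dunford_pettis_sequential_general μ f hf_int hui
end

section
/- Let X, Y be quasi-normed lattices of measurable functions on the same σ-finite measure space. Define the pointwise product space XY = {fg : f ∈ X, g ∈ Y} with ‖h‖_{XY} = inf{‖f‖_X ‖g‖_Y : h = fg}. Then ‖·‖_{XY} is a quasi-norm and XY is a lattice: if |h'| ≤ |h| a.e. with h ∈ XY, then h' ∈ XY and ‖h'‖_{XY} ≤ ‖h‖_{XY}. -/
open MeasureTheory

/-- A quasi-normed lattice of measurable functions on a σ-finite measure space: a
quasi-normed linear space of (a.e. classes of) measurable functions with the ideal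
property: `|f| ≤ |g|` a.e. with `g` in the space implies `f` is in the space with
`‖f‖ ≤ ‖g‖`. -/
structure QuasiNormedFunctionLattice (Ω : Type*) [MeasurableSpace Ω] (μ : Measure Ω) where
  Mem : (Ω → ℝ) → Prop
  norm : (Ω → ℝ) → ℝ
  const : ℝ
  one_le_const : 1 ≤ const
  mem_aemeasurable : ∀ f, Mem f → AEMeasurable f μ
  mem_congr : ∀ f g, Mem f → f =ᵐ[μ] g → Mem g ∧ norm g = norm f
  mem_zero : Mem 0
  mem_add : ∀ f g, Mem f → Mem g → Mem (f + g)
  mem_smul : ∀ (c : ℝ) f, Mem f → Mem (c • f)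
  norm_nonneg : ∀ f, Mem f → 0 ≤ norm f
  norm_eq_zero : ∀ f, Mem f → norm f = 0 → f =ᵐ[μ] 0
  norm_add_le : ∀ f g, Mem f → Mem g → norm (f + g) ≤ const * (norm f + norm g)
  norm_smul : ∀ (c : ℝ) f, Mem f → norm (c • f) = |c| * norm f
  ideal : ∀ f g, AEMeasurable f μ → Mem g → (∀ᵐ x ∂μ, |f x| ≤ |g x|) →
    Mem f ∧ norm f ≤ norm g

variable {Ω : Type*} [MeasurableSpace Ω] {μ : Measure Ω}

/-- Membership in the pointwise product space `XY = {fg : f ∈ X, g ∈ Y}`. -/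
def ProdMem (X Y : QuasiNormedFunctionLattice Ω μ) (h : Ω → ℝ) : Prop :=
  ∃ f g, X.Mem f ∧ Y.Mem g ∧ h =ᵐ[μ] fun x => f x * g x

/-- The infimum quasi-norm `‖h‖_{XY} = inf {‖f‖_X ‖g‖_Y : h = fg}` on `XY`. -/
noncomputable def ProdNorm (X Y : QuasiNormedFunctionLattice Ω μ) (h : Ω → ℝ) : ℝ :=
  sInf {c : ℝ | ∃ f g, X.Mem f ∧ Y.Mem g ∧ (h =ᵐ[μ] fun x => f x * g x) ∧
    c = X.norm f * Y.norm g}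

namespace ProdAux

open Pointwise

variable (X Y : QuasiNormedFunctionLattice Ω μ)

/-- The defining set of the infimum. -/
def S (h : Ω → ℝ) : Set ℝ :=
  {c : ℝ | ∃ f g, X.Mem f ∧ Y.Mem g ∧ (h =ᵐ[μ] fun x => f x * g x) ∧
    c = X.norm f * Y.norm g}

lemma prodNorm_eq (h : Ω → ℝ) : ProdNorm X Y h = sInf (S X Y h) := rfl

lemma bddBelow_S (h : Ω → ℝ) : BddBelow (S X Y h) := by
  refine ⟨0, fun c hc => ?_⟩
  obtain ⟨f, g, hf, hg, -, rfl⟩ := hc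
  exact mul_nonneg (X.norm_nonneg f hf) (Y.norm_nonneg g hg)

lemma nonempty_S {h : Ω → ℝ} (hm : ProdMem X Y h) : (S X Y h).Nonempty := by
  obtain ⟨f, g, hf, hg, he⟩ := hm
  exact ⟨X.norm f * Y.norm g, f, g, hf, hg, he, rfl⟩

lemma prodNorm_nonneg {h : Ω → ℝ} : 0 ≤ ProdNorm X Y h := by
  refine Real.sInf_nonneg fun c hc => ?_
  obtain ⟨f, g, hf, hg, -, rfl⟩ := hc
  exact mul_nonneg (X.norm_nonneg f hf) (Y.norm_nonneg g hg)

lemma prodNorm_le {h f g : Ω → ℝ} (hf : X.Mem f) (hg : Y.Mem g)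
    (he : h =ᵐ[μ] fun x => f x * g x) : ProdNorm X Y h ≤ X.norm f * Y.norm g :=
  csInf_le (bddBelow_S X Y h) ⟨f, g, hf, hg, he, rfl⟩

lemma norm_zero : X.norm 0 = 0 := by
  have := X.norm_smul 0 0 X.mem_zero
  simpa using this

/-- Balanced near-optimal factorization. -/
lemma balanced {h : Ω → ℝ} (hm : ProdMem X Y h) {ε : ℝ} (hε : 0 < ε) :
    ∃ f g, X.Mem f ∧ Y.Mem g ∧ (h =ᵐ[μ] fun x => f x * g x) ∧
      X.norm f ≤ Real.sqrt (ProdNorm X Y h + ε) ∧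
      Y.norm g ≤ Real.sqrt (ProdNorm X Y h + ε) := by
  have hN0 : 0 ≤ ProdNorm X Y h := prodNorm_nonneg X Y
  set s := Real.sqrt (ProdNorm X Y h + ε) with hs
  have hspos : 0 < s := Real.sqrt_pos.2 (by linarith)
  have hs2 : s * s = ProdNorm X Y h + ε := Real.mul_self_sqrt (by linarith)
  obtain ⟨a, ha, halt⟩ := Real.lt_sInf_add_pos (nonempty_S X Y hm) hε
  obtain ⟨f₀, g₀, hf₀, hg₀, he₀, rfl⟩ := ha
  have hA0 : 0 ≤ X.norm f₀ := X.norm_nonneg _ hf₀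
  have hB0 : 0 ≤ Y.norm g₀ := Y.norm_nonneg _ hg₀
  have hab : X.norm f₀ * Y.norm g₀ < s * s := by rw [hs2]; exact halt
  have key : ∀ lam : ℝ, 0 < lam →
      h =ᵐ[μ] fun x => (lam • f₀) x * (lam⁻¹ • g₀) x := by
    intro lam hlam
    refine he₀.trans (Filter.Eventually.of_forall fun x => ?_)
    simp only [Pi.smul_apply, smul_eq_mul]
    field_simp
  by_cases h0 : X.norm f₀ = 0
  · set lam : ℝ := (Y.norm g₀ + s) / s with hlam
    have hlampos : 0 < lam := by positivity
    refine ⟨lam • f₀, lam⁻¹ • g₀, X.mem_smul _ _ hf₀, Y.mem_smul _ _ hg₀,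
      key lam hlampos, ?_, ?_⟩
    · rw [X.norm_smul _ _ hf₀, abs_of_pos hlampos, h0, mul_zero]
      exact hspos.le
    · rw [Y.norm_smul _ _ hg₀, abs_of_pos (inv_pos.2 hlampos), hlam, inv_div,
        div_mul_eq_mul_div, div_le_iff₀ (by positivity)]
      nlinarith
  · have hApos : 0 < X.norm f₀ := lt_of_le_of_ne hA0 (Ne.symm h0)
    set lam : ℝ := s / X.norm f₀ with hlam
    have hlampos : 0 < lam := div_pos hspos hApos
    refine ⟨lam • f₀, lam⁻¹ • g₀, X.mem_smul _ _ hf₀, Y.mem_smul _ _ hg₀,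
      key lam hlampos, ?_, ?_⟩
    · rw [X.norm_smul _ _ hf₀, abs_of_pos hlampos, hlam,
        div_mul_cancel₀ _ hApos.ne']
    · rw [Y.norm_smul _ _ hg₀, abs_of_pos (inv_pos.2 hlampos), hlam, inv_div,
        div_mul_eq_mul_div, div_le_iff₀ hspos]
      nlinarith


lemma prodMem_smul {h : Ω → ℝ} (c : ℝ) (hm : ProdMem X Y h) :
    ProdMem X Y (c • h) := by
  obtain ⟨f, g, hf, hg, he⟩ := hm
  refine ⟨c • f, g, X.mem_smul _ _ hf, hg, ?_⟩
  filter_upwards [he] with x hx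
  simp only [Pi.smul_apply, smul_eq_mul, hx]
  ring

lemma prodNorm_smul_le (c : ℝ) {h : Ω → ℝ} (hm : ProdMem X Y h) :
    ProdNorm X Y (c • h) ≤ |c| * ProdNorm X Y h := by
  have hsub : |c| • S X Y h ⊆ S X Y (c • h) := by
    rintro - ⟨a, ⟨f, g, hf, hg, he, rfl⟩, rfl⟩
    refine ⟨c • f, g, X.mem_smul _ _ hf, hg, ?_, ?_⟩
    · filter_upwards [he] with x hx
      simp only [Pi.smul_apply, smul_eq_mul, hx]
      ring
    · rw [X.norm_smul _ _ hf]
      simp [smul_eq_mul, mul_assoc]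
  calc ProdNorm X Y (c • h) = sInf (S X Y (c • h)) := rfl
    _ ≤ sInf (|c| • S X Y h) := by
        refine csInf_le_csInf (bddBelow_S X Y _) ?_ hsub
        obtain ⟨a, ha⟩ := nonempty_S X Y hm
        exact ⟨|c| • a, a, ha, rfl⟩
    _ = |c| * ProdNorm X Y h := by
        rw [Real.sInf_smul_of_nonneg (abs_nonneg c)]; rfl

lemma prodNorm_smul (c : ℝ) {h : Ω → ℝ} (hm : ProdMem X Y h) :
    ProdNorm X Y (c • h) = |c| * ProdNorm X Y h := by
  rcases eq_or_ne c 0 with rfl | hc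
  · simp only [abs_zero, zero_mul]
    refine le_antisymm ?_ (prodNorm_nonneg X Y)
    have := prodNorm_smul_le X Y (0 : ℝ) hm
    simpa using this
  · refine le_antisymm (prodNorm_smul_le X Y c hm) ?_
    have h2 := prodNorm_smul_le X Y c⁻¹ (prodMem_smul X Y c hm)
    rw [inv_smul_smul₀ hc, abs_inv] at h2
    have habs : 0 < |c| := abs_pos.2 hc
    calc |c| * ProdNorm X Y h ≤ |c| * (|c|⁻¹ * ProdNorm X Y (c • h)) := by
          exact mul_le_mul_of_nonneg_left h2 habs.le
      _ = ProdNorm X Y (c • h) := by field_simp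

lemma ideal_prod {h h' : Ω → ℝ} (hh' : AEMeasurable h' μ) (hm : ProdMem X Y h)
    (hle : ∀ᵐ x ∂μ, |h' x| ≤ |h x|) :
    ProdMem X Y h' ∧ ProdNorm X Y h' ≤ ProdNorm X Y h := by
  have factor : ∀ f g : Ω → ℝ, X.Mem f → Y.Mem g →
      (h =ᵐ[μ] fun x => f x * g x) → ∃ g', Y.Mem g' ∧ Y.norm g' ≤ Y.norm g ∧
        (h' =ᵐ[μ] fun x => f x * g' x) := by
    intro f g hf hg he
    set g' : Ω → ℝ := fun x => h' x / f x with hg'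
    have hg'm : AEMeasurable g' μ := hh'.div (X.mem_aemeasurable f hf)
    have hkey : ∀ᵐ x ∂μ, |h' x| ≤ |f x * g x| := by
      filter_upwards [hle, he] with x h1 h2
      rw [← h2]; exact h1
    have hbound : ∀ᵐ x ∂μ, |g' x| ≤ |g x| := by
      filter_upwards [hkey] with x hx
      rcases eq_or_ne (f x) 0 with h0 | h0
      · simp [hg', h0, abs_nonneg]
      · rw [hg', abs_div, div_le_iff₀ (abs_pos.2 h0)]
        calc |h' x| ≤ |f x * g x| := hx
          _ = |g x| * |f x| := by rw [abs_mul]; ring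
    obtain ⟨hmem', hnorm'⟩ := Y.ideal g' g hg'm hg hbound
    refine ⟨g', hmem', hnorm', ?_⟩
    filter_upwards [hkey] with x hx
    rcases eq_or_ne (f x) 0 with h0 | h0
    · have : |h' x| ≤ 0 := by simpa [h0] using hx
      have hz : h' x = 0 := abs_nonpos_iff.1 this
      simp [hz, h0]
    · simp [hg', mul_div_cancel₀ _ h0]
  constructor
  · obtain ⟨f, g, hf, hg, he⟩ := hm
    obtain ⟨g', hg', -, he'⟩ := factor f g hf hg he
    exact ⟨f, g', hf, hg', he'⟩
  · refine le_csInf (nonempty_S X Y hm) ?_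
    rintro - ⟨f, g, hf, hg, he, rfl⟩
    obtain ⟨g', hg', hn', he'⟩ := factor f g hf hg he
    calc ProdNorm X Y h' ≤ X.norm f * Y.norm g' := prodNorm_le X Y hf hg' he'
      _ ≤ X.norm f * Y.norm g :=
        mul_le_mul_of_nonneg_left hn' (X.norm_nonneg f hf)


lemma prodMem_aemeasurable {h : Ω → ℝ} (hm : ProdMem X Y h) : AEMeasurable h μ := by
  obtain ⟨f, g, hf, hg, he⟩ := hm
  exact ((X.mem_aemeasurable f hf).mul (Y.mem_aemeasurable g hg)).congr he.symm

lemma abs_mem_X {f : Ω → ℝ} (hf : X.Mem f) :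
    X.Mem (fun x => |f x|) ∧ X.norm (fun x => |f x|) ≤ X.norm f := by
  refine X.ideal _ f ?_ hf (Filter.Eventually.of_forall fun x => by simp)
  have := X.mem_aemeasurable f hf
  fun_prop

lemma triangle_key {h₁ h₂ : Ω → ℝ} (m₁ : ProdMem X Y h₁) (m₂ : ProdMem X Y h₂)
    {ε : ℝ} (hε : 0 < ε) :
    ∃ F G : Ω → ℝ, X.Mem F ∧ Y.Mem G ∧ ((h₁ + h₂) =ᵐ[μ] fun x => F x * G x) ∧
      X.norm F * Y.norm G ≤
        2 * X.const * Y.const * (ProdNorm X Y h₁ + ProdNorm X Y h₂) +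
          4 * X.const * Y.const * ε := by
  obtain ⟨f₁, g₁, hf₁, hg₁, he₁, hnf₁, hng₁⟩ := balanced X Y m₁ hε
  obtain ⟨f₂, g₂, hf₂, hg₂, he₂, hnf₂, hng₂⟩ := balanced X Y m₂ hε
  set N₁ := ProdNorm X Y h₁
  set N₂ := ProdNorm X Y h₂
  have hN₁ : 0 ≤ N₁ := prodNorm_nonneg X Y
  have hN₂ : 0 ≤ N₂ := prodNorm_nonneg X Y
  set s₁ := Real.sqrt (N₁ + ε) with hs₁
  set s₂ := Real.sqrt (N₂ + ε) with hs₂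
  have hs₁0 : 0 ≤ s₁ := Real.sqrt_nonneg _
  have hs₂0 : 0 ≤ s₂ := Real.sqrt_nonneg _
  have hs₁2 : s₁ * s₁ = N₁ + ε := Real.mul_self_sqrt (by linarith)
  have hs₂2 : s₂ * s₂ = N₂ + ε := Real.mul_self_sqrt (by linarith)
  have hCX : (0:ℝ) < X.const := lt_of_lt_of_le one_pos X.one_le_const
  have hCY : (0:ℝ) < Y.const := lt_of_lt_of_le one_pos Y.one_le_const
  -- The factor F
  set F : Ω → ℝ := (fun x => |f₁ x|) + fun x => |f₂ x| with hF
  have hFmem : X.Mem F := X.mem_add _ _ (abs_mem_X X hf₁).1 (abs_mem_X X hf₂).1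
  have hFnorm : X.norm F ≤ X.const * (s₁ + s₂) := by
    calc X.norm F ≤ X.const * (X.norm (fun x => |f₁ x|) + X.norm (fun x => |f₂ x|)) :=
          X.norm_add_le _ _ (abs_mem_X X hf₁).1 (abs_mem_X X hf₂).1
      _ ≤ X.const * (s₁ + s₂) := by
          refine mul_le_mul_of_nonneg_left ?_ hCX.le
          have a1 := (abs_mem_X X hf₁).2
          have a2 := (abs_mem_X X hf₂).2
          linarith
  -- The factor G
  set G : Ω → ℝ := fun x => (h₁ x + h₂ x) / (|f₁ x| + |f₂ x|) with hG
  have h₁m : AEMeasurable h₁ μ := prodMem_aemeasurable X Y m₁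
  have h₂m : AEMeasurable h₂ μ := prodMem_aemeasurable X Y m₂
  have hf₁m := X.mem_aemeasurable f₁ hf₁
  have hf₂m := X.mem_aemeasurable f₂ hf₂
  have hGm : AEMeasurable G μ := by
    apply AEMeasurable.div
    · exact h₁m.add h₂m
    · fun_prop
  set B : Ω → ℝ := (fun x => |g₁ x|) + fun x => |g₂ x| with hB
  have hBmem : Y.Mem B := Y.mem_add _ _ (abs_mem_X Y hg₁).1 (abs_mem_X Y hg₂).1
  have hBnorm : Y.norm B ≤ Y.const * (s₁ + s₂) := by
    calc Y.norm B ≤ Y.const * (Y.norm (fun x => |g₁ x|) + Y.norm (fun x => |g₂ x|)) :=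
          Y.norm_add_le _ _ (abs_mem_X Y hg₁).1 (abs_mem_X Y hg₂).1
      _ ≤ Y.const * (s₁ + s₂) := by
          refine mul_le_mul_of_nonneg_left ?_ hCY.le
          have a1 := (abs_mem_X Y hg₁).2
          have a2 := (abs_mem_X Y hg₂).2
          linarith
  have hGB : ∀ᵐ x ∂μ, |G x| ≤ |B x| := by
    filter_upwards [he₁, he₂] with x hx₁ hx₂
    have hBx : B x = |g₁ x| + |g₂ x| := rfl
    have hBnn : 0 ≤ B x := by rw [hBx]; positivity
    rw [abs_of_nonneg hBnn]
    rcases eq_or_ne (|f₁ x| + |f₂ x|) 0 with h0 | h0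
    · have : G x = 0 := by simp [hG, h0]
      rw [this, abs_zero]; rw [hBx]; positivity
    · have hD : 0 < |f₁ x| + |f₂ x| := lt_of_le_of_ne (by positivity) (Ne.symm h0)
      have habs : |h₁ x + h₂ x| ≤ |f₁ x| * |g₁ x| + |f₂ x| * |g₂ x| := by
        rw [hx₁, hx₂]
        calc |f₁ x * g₁ x + f₂ x * g₂ x| ≤ |f₁ x * g₁ x| + |f₂ x * g₂ x| := abs_add_le _ _
          _ = |f₁ x| * |g₁ x| + |f₂ x| * |g₂ x| := by rw [abs_mul, abs_mul]
      have : |G x| = |h₁ x + h₂ x| / (|f₁ x| + |f₂ x|) := by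
        rw [hG, abs_div, abs_of_pos hD]
      rw [this, div_le_iff₀ hD, hBx]
      nlinarith [abs_nonneg (f₁ x), abs_nonneg (f₂ x), abs_nonneg (g₁ x), abs_nonneg (g₂ x)]
  obtain ⟨hGmem, hGnorm'⟩ := Y.ideal G B hGm hBmem hGB
  have hGnorm : Y.norm G ≤ Y.const * (s₁ + s₂) := hGnorm'.trans hBnorm
  refine ⟨F, G, hFmem, hGmem, ?_, ?_⟩
  · filter_upwards [he₁, he₂] with x hx₁ hx₂
    have hFx : F x = |f₁ x| + |f₂ x| := rfl
    rcases eq_or_ne (|f₁ x| + |f₂ x|) 0 with h0 | h0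
    · obtain ⟨z₁, z₂⟩ := (add_eq_zero_iff_of_nonneg (abs_nonneg _) (abs_nonneg _)).1 h0
      have hz₁ : f₁ x = 0 := abs_eq_zero.1 z₁
      have hz₂ : f₂ x = 0 := abs_eq_zero.1 z₂
      simp [Pi.add_apply, hx₁, hx₂, hz₁, hz₂, hFx, h0, hG]
    · have : F x * G x = h₁ x + h₂ x := by
        rw [hFx, hG]; exact mul_div_cancel₀ _ h0
      simp [Pi.add_apply, this]
  · have hFnn : 0 ≤ X.norm F := X.norm_nonneg _ hFmem
    have hGnn : 0 ≤ Y.norm G := Y.norm_nonneg _ hGmem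
    calc X.norm F * Y.norm G ≤ (X.const * (s₁ + s₂)) * (Y.const * (s₁ + s₂)) := by
          exact mul_le_mul hFnorm hGnorm hGnn (by positivity)
      _ = X.const * Y.const * ((s₁ + s₂) * (s₁ + s₂)) := by ring
      _ ≤ X.const * Y.const * (2 * ((N₁ + ε) + (N₂ + ε))) := by
          refine mul_le_mul_of_nonneg_left ?_ (by positivity)
          nlinarith [sq_nonneg (s₁ - s₂), hs₁2, hs₂2]
      _ = 2 * X.const * Y.const * (N₁ + N₂) + 4 * X.const * Y.const * ε := by ring

end ProdAux



/-- For quasi-normed lattices `X, Y` of measurable functions on the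
same σ-finite measure space, the product space `XY` with the infimum quasi-norm is
again a quasi-normed lattice: the norm is nonnegative and absolutely homogeneous,
satisfies a quasi-triangle inequality, and `XY` has the ideal (lattice) property:
`|h'| ≤ |h|` a.e. with `h ∈ XY` implies `h' ∈ XY` and `‖h'‖_{XY} ≤ ‖h‖_{XY}`. -/
theorem prod_lattice_quasiNorm
    [SigmaFinite μ] (X Y : QuasiNormedFunctionLattice Ω μ) :
    (∀ h, ProdMem X Y h → 0 ≤ ProdNorm X Y h) ∧
    (∀ (c : ℝ) h, ProdMem X Y h → ProdMem X Y (c • h) ∧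
      ProdNorm X Y (c • h) = |c| * ProdNorm X Y h) ∧
    (∃ κ : ℝ, 1 ≤ κ ∧ ∀ h₁ h₂, ProdMem X Y h₁ → ProdMem X Y h₂ →
      ProdMem X Y (h₁ + h₂) ∧
      ProdNorm X Y (h₁ + h₂) ≤ κ * (ProdNorm X Y h₁ + ProdNorm X Y h₂)) ∧
    (∀ h h' : Ω → ℝ, AEMeasurable h' μ → ProdMem X Y h →
      (∀ᵐ x ∂μ, |h' x| ≤ |h x|) →
      ProdMem X Y h' ∧ ProdNorm X Y h' ≤ ProdNorm X Y h) := by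
  have hCX : (0:ℝ) < X.const := lt_of_lt_of_le one_pos X.one_le_const
  have hCY : (0:ℝ) < Y.const := lt_of_lt_of_le one_pos Y.one_le_const
  refine ⟨fun h _ => ProdAux.prodNorm_nonneg X Y,
    fun c h hm => ⟨ProdAux.prodMem_smul X Y c hm, ProdAux.prodNorm_smul X Y c hm⟩,
    ⟨2 * X.const * Y.const, ?_, fun h₁ h₂ m₁ m₂ => ⟨?_, ?_⟩⟩,
    fun h h' hh' hm hle => ProdAux.ideal_prod X Y hh' hm hle⟩
  · nlinarith [X.one_le_const, Y.one_le_const]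
  · obtain ⟨F, G, hF, hG, he, -⟩ := ProdAux.triangle_key X Y m₁ m₂ one_pos
    exact ⟨F, G, hF, hG, he⟩
  · refine le_of_forall_pos_le_add fun ε hε => ?_
    have hC : (0:ℝ) < 4 * X.const * Y.const := by positivity
    obtain ⟨F, G, hF, hG, he, hb⟩ :=
      ProdAux.triangle_key X Y m₁ m₂ (div_pos hε hC)
    calc ProdNorm X Y (h₁ + h₂) ≤ X.norm F * Y.norm G :=
          ProdAux.prodNorm_le X Y hF hG he
      _ ≤ 2 * X.const * Y.const * (ProdNorm X Y h₁ + ProdNorm X Y h₂) +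
            4 * X.const * Y.const * (ε / (4 * X.const * Y.const)) := hb
      _ = 2 * X.const * Y.const * (ProdNorm X Y h₁ + ProdNorm X Y h₂) + ε := by
          rw [mul_div_cancel₀ _ hC.ne']
end
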